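/- arXiv:2505.16311 — 2 statements merged into one kernel-verified Lean document; each statement's English description precedes it below -/
import Mathlib

section
/- Let V₀ be a d×d positive definite real matrix, and let a₁,…,aₙ ∈ ℝ^d satisfy ‖aₜ‖₂ ≤ L for all t. Define Vₜ = V₀ + Σ_{s=1}^t aₛaₛᵀ. Then Σ_{t=1}^n min(1, ‖aₜ‖²_{V_{t-1}^{-1}}) ≤ 2 log(det Vₙ / det V₀). -/
open Matrix Finset

/-!
Adding the rank-one term `a aᵀ` to a positive definite `V` multiplies its determinant by
`1 + ‖a‖²_{V⁻¹}` (matrix determinant lemma), so `log det V` telescopes along the sequence `Vₜ`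
into the sum of the `log (1 + ‖aₜ‖²_{V_{t-1}⁻¹})`, and `min 1 x ≤ 2 log (1 + x)` for `x ≥ 0`.
-/

theorem Matrix.det_add_vecMulVec {m α : Type*} [Fintype m] [DecidableEq m] [CommRing α]
    {A : Matrix m m α} (hA : IsUnit A.det) (u v : m → α) :
    (A + vecMulVec u v).det = A.det * (1 + v ⬝ᵥ A⁻¹ *ᵥ u) := by
  rw [vecMulVec_eq Unit, det_add_replicateCol_mul_replicateRow hA, Matrix.mul_assoc,
    ← replicateCol_mulVec]
  congr 1
  simp only [det_unique, add_apply, one_apply_eq, replicateRow_mul_replicateCol_apply]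

theorem Matrix.PosDef.add_sum_vecMulVec_self {n ι : Type*} [Fintype n]
    {A : Matrix n n ℝ} (hA : A.PosDef) (a : ι → n → ℝ) (s : Finset ι) :
    (A + ∑ i ∈ s, vecMulVec (a i) (a i)).PosDef :=
  hA.add_posSemidef <| posSemidef_sum s fun i _ => by
    simpa only [star_trivial] using posSemidef_vecMulVec_self_star (a i)

theorem Matrix.PosDef.dotProduct_inv_mulVec_self_nonneg {n : Type*} [Fintype n] [DecidableEq n]
    {A : Matrix n n ℝ} (hA : A.PosDef) (u : n → ℝ) : 0 ≤ u ⬝ᵥ A⁻¹ *ᵥ u := by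
  simpa only [star_trivial] using hA.inv.posSemidef.dotProduct_mulVec_nonneg u

theorem Matrix.PosDef.log_det_add_vecMulVec_self {n : Type*} [Fintype n] [DecidableEq n]
    {A : Matrix n n ℝ} (hA : A.PosDef) (u : n → ℝ) :
    Real.log (A + vecMulVec u u).det = Real.log A.det + Real.log (1 + u ⬝ᵥ A⁻¹ *ᵥ u) := by
  rw [det_add_vecMulVec hA.det_pos.ne'.isUnit u u,
    Real.log_mul hA.det_pos.ne' (by linarith [hA.dotProduct_inv_mulVec_self_nonneg u])]

theorem Real.min_one_le_two_mul_log_one_add {x : ℝ} (hx : 0 ≤ x) :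
    min 1 x ≤ 2 * Real.log (1 + x) := by
  have hmin : min 1 x ≤ 2 * (2 * x / (x + 2)) := by
    rw [mul_div_assoc', le_div_iff₀ (by positivity)]
    rcases le_total x 1 with h | h
    · rw [min_eq_right h]; nlinarith
    · rw [min_eq_left h]; linarith
  linarith [le_log_one_add_of_nonneg hx]

theorem elliptical_potential_first_general {d n : ℕ} (V₀ : Matrix (Fin d) (Fin d) ℝ)
    (hV₀ : V₀.PosDef) (a : ℕ → (Fin d → ℝ))
    (V : ℕ → Matrix (Fin d) (Fin d) ℝ)
    (hV : ∀ t, V t = V₀ + ∑ s ∈ Finset.range t, vecMulVec (a s) (a s)) :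
    ∑ t ∈ Finset.range n, min 1 (a t ⬝ᵥ ((V t)⁻¹ *ᵥ a t)) ≤
      2 * Real.log ((V n).det / V₀.det) := by
  have hPD (t : ℕ) : (V t).PosDef := hV t ▸ hV₀.add_sum_vecMulVec_self a _
  have hstep (t : ℕ) : Real.log (1 + a t ⬝ᵥ (V t)⁻¹ *ᵥ a t) =
      Real.log (V (t + 1)).det - Real.log (V t).det := by
    rw [hV (t + 1), sum_range_succ, ← add_assoc, ← hV t,
      (hPD t).log_det_add_vecMulVec_self]
    ring
  calc ∑ t ∈ range n, min 1 (a t ⬝ᵥ ((V t)⁻¹ *ᵥ a t))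
      ≤ ∑ t ∈ range n, 2 * Real.log (1 + a t ⬝ᵥ (V t)⁻¹ *ᵥ a t) :=
        sum_le_sum fun t _ => Real.min_one_le_two_mul_log_one_add <|
          (hPD t).dotProduct_inv_mulVec_self_nonneg (a t)
    _ = 2 * (Real.log (V n).det - Real.log (V 0).det) := by
        simp only [← mul_sum, hstep, sum_range_sub fun t => Real.log (V t).det]
    _ = 2 * Real.log ((V n).det / V₀.det) := by
        rw [Real.log_div (hPD n).det_pos.ne' hV₀.det_pos.ne', hV 0, range_zero, sum_empty,
          add_zero]

/-- Elliptical potential lemma, first inequality. Writing `a 0, …, a (n-1)` for the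
vectors `a₁, …, aₙ` and `V t = V₀ + Σ_{s < t} aₛaₛᵀ` (so that `V (t-1)` is the matrix
seen before round `t`), if `V₀` is positive definite and `‖aₜ‖₂ ≤ L` for all `t`, then
`Σ_{t=1}^n min(1, ‖aₜ‖²_{V_{t-1}⁻¹}) ≤ 2 log(det Vₙ / det V₀)`. -/
theorem elliptical_potential_first {d n : ℕ} (V₀ : Matrix (Fin d) (Fin d) ℝ)
    (hV₀ : V₀.PosDef) (a : ℕ → (Fin d → ℝ)) (L : ℝ)
    (hL : ∀ t < n, Real.sqrt (∑ i, (a t i) ^ 2) ≤ L)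
    (V : ℕ → Matrix (Fin d) (Fin d) ℝ)
    (hV : ∀ t, V t = V₀ + ∑ s ∈ Finset.range t, vecMulVec (a s) (a s)) :
    ∑ t ∈ Finset.range n, min 1 (a t ⬝ᵥ ((V t)⁻¹ *ᵥ a t)) ≤
      2 * Real.log ((V n).det / V₀.det) :=
  elliptical_potential_first_general V₀ hV₀ a V hV
end

section
/- Let V₀ be a d×d positive definite real matrix and a₁,…,aₙ ∈ ℝ^d with ‖aₜ‖₂ ≤ L for all t, and Vₙ = V₀ + Σ_{s=1}^n aₛaₛᵀ. Then 2 log(det Vₙ / det V₀) ≤ 2d log((Tr(V₀) + n L²) / (d · det(V₀)^{1/d})). -/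
open Matrix Finset

/-!
Since `Vₙ` is positive definite, `det Vₙ` and `Tr Vₙ` are the product and the sum of its
nonnegative eigenvalues, so AM-GM gives `det Vₙ ≤ (Tr Vₙ / d) ^ d`, while
`Tr Vₙ = Tr V₀ + ∑ ‖aₛ‖² ≤ Tr V₀ + n L²`. The right-hand side of the claim is
`2 log (((Tr V₀ + n L²) / d) ^ d / det V₀)`, so taking logarithms concludes.
-/

theorem Real.prod_le_sum_div_card_pow {ι : Type*} (s : Finset ι) {z : ι → ℝ}
    (hz : ∀ i ∈ s, 0 ≤ z i) : ∏ i ∈ s, z i ≤ ((∑ i ∈ s, z i) / #s) ^ #s := by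
  rcases s.eq_empty_or_nonempty with rfl | hs
  · simp
  have hcard : #s ≠ 0 := hs.card_pos.ne'
  have amgm := Real.geom_mean_le_arith_mean s (fun _ ↦ 1) z (fun _ _ ↦ zero_le_one)
    (by simpa using hs.card_pos) hz
  simp only [Real.rpow_one, sum_const, nsmul_eq_mul, mul_one, one_mul] at amgm
  calc ∏ i ∈ s, z i = ((∏ i ∈ s, z i) ^ ((#s : ℝ)⁻¹)) ^ #s :=
        (Real.rpow_inv_natCast_pow (prod_nonneg hz) hcard).symm
    _ ≤ ((∑ i ∈ s, z i) / #s) ^ #s := by gcongr; exact Real.rpow_nonneg (prod_nonneg hz) _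

theorem Matrix.PosSemidef.det_le_trace_div_card_pow {ι : Type*} [Fintype ι] [DecidableEq ι]
    {A : Matrix ι ι ℝ} (hA : A.PosSemidef) :
    A.det ≤ (A.trace / Fintype.card ι) ^ Fintype.card ι := by
  rw [hA.isHermitian.det_eq_prod_eigenvalues, hA.isHermitian.trace_eq_sum_eigenvalues]
  simpa using Real.prod_le_sum_div_card_pow univ fun i _ ↦ hA.eigenvalues_nonneg i

theorem Matrix.trace_vecMulVec_self_le_sq {ι : Type*} [Fintype ι] {a : ι → ℝ} {L : ℝ}
    (ha : √(∑ i, a i ^ 2) ≤ L) : (vecMulVec a a).trace ≤ L ^ 2 := by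
  simpa [trace_vecMulVec, dotProduct, sq] using (Real.sqrt_le_iff.mp ha).2

theorem Matrix.trace_add_sum_vecMulVec_self_le {ι : Type*} [Fintype ι] (V : Matrix ι ι ℝ)
    (a : ℕ → ι → ℝ) {n : ℕ} {L : ℝ} (ha : ∀ t < n, √(∑ i, a t i ^ 2) ≤ L) :
    (V + ∑ s ∈ range n, vecMulVec (a s) (a s)).trace ≤ V.trace + n * L ^ 2 := by
  rw [trace_add, trace_sum]
  gcongr
  simpa using sum_le_sum fun s hs ↦ trace_vecMulVec_self_le_sq (ha s (mem_range.mp hs))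

theorem Real.natCast_mul_log_div_mul_rpow_one_div {x D : ℝ} (hD : 0 ≤ D) {d : ℕ} (hd : d ≠ 0) :
    d * Real.log (x / (d * D ^ (1 / (d : ℝ)))) = Real.log ((x / d) ^ d / D) := by
  rw [← Real.log_pow, div_pow, mul_pow, one_div, Real.rpow_inv_natCast_pow hD hd, div_pow, div_div]

/-- Determinant–trace bound in the elliptical potential lemma: with
`Vₙ = V₀ + Σ_{s=1}^n aₛaₛᵀ`, `V₀` positive definite, and `‖aₛ‖₂ ≤ L`,
`2 log(det Vₙ / det V₀) ≤ 2 d log((Tr V₀ + n L²) / (d · det(V₀)^{1/d}))`. -/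
theorem elliptical_potential_det_trace {d n : ℕ} (V₀ : Matrix (Fin d) (Fin d) ℝ)
    (hV₀ : V₀.PosDef) (a : ℕ → (Fin d → ℝ)) (L : ℝ)
    (hL : ∀ t < n, Real.sqrt (∑ i, (a t i) ^ 2) ≤ L)
    (Vₙ : Matrix (Fin d) (Fin d) ℝ)
    (hVₙ : Vₙ = V₀ + ∑ s ∈ Finset.range n, vecMulVec (a s) (a s)) :
    2 * Real.log (Vₙ.det / V₀.det) ≤
      2 * d * Real.log ((V₀.trace + n * L ^ 2) / (d * V₀.det ^ (1 / (d : ℝ)))) := by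
  rcases eq_or_ne d 0 with rfl | hd
  · simp
  have hVₙ_pd : Vₙ.PosDef :=
    hVₙ ▸ hV₀.add_posSemidef (posSemidef_sum _ fun s _ ↦ posSemidef_vecMulVec_self_star (a s))
  have hdet : Vₙ.det ≤ ((V₀.trace + n * L ^ 2) / d) ^ d := by
    calc Vₙ.det ≤ (Vₙ.trace / d) ^ d := by simpa using hVₙ_pd.posSemidef.det_le_trace_div_card_pow
      _ ≤ _ := by
        gcongr
        · exact div_nonneg hVₙ_pd.posSemidef.trace_nonneg d.cast_nonneg
        · exact hVₙ ▸ trace_add_sum_vecMulVec_self_le V₀ a hL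
  rw [mul_assoc, Real.natCast_mul_log_div_mul_rpow_one_div hV₀.det_pos.le hd]
  gcongr
  · exact div_pos hVₙ_pd.det_pos hV₀.det_pos
  · exact hV₀.det_pos.le
end
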